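/- A representative function on a Lie group is R-entire for every R < 1: if φ ∈ C^ω(G) has finite-dimensional orbit O_φ under left translations, then for every c ≥ 0, q_{R,c}(φ) ≤ Δ·‖φ‖·Σ_{k=0}^∞ k!^{R−1}(cΨn)^k < ∞, where Ψ bounds the operator norms of the Lie derivatives L_{X_i} on O_φ and Δ the norm of the evaluation functional at the unit. -/

import Mathlib

/-!
Every term of `q_{R,c}(φ)` is controlled by operator norms alone: a chain of `k` Lie derivatives
scales `‖φ‖` by at most the product of their norms, and summing these products over all `α` gives
`(∑ i, ‖L_{X_i}‖)^k ≤ (nΨ)^k`. So `q_{R,c}(φ)` is dominated termwise by `Δ‖φ‖ k!^{R-1} (cΨn)^k`,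
whose series converges by the ratio test because the ratio of consecutive terms is
`(k+1)^{R-1} cΨn → 0` when `R < 1`.
-/

/-- Apply the operators `T i` along a list of indices, head of the list outermost. -/
def chainApply {W : Type*} [NormedAddCommGroup W] [NormedSpace ℂ W] {n : ℕ}
    (T : Fin n → W →L[ℂ] W) (l : List (Fin n)) (x : W) : W :=
  l.foldr (fun i y => T i y) x

open Filter Topology

lemma norm_factorial_rpow_mul_pow_succ (s t : ℝ) (k : ℕ) :
    ‖((k + 1).factorial : ℝ) ^ s * t ^ (k + 1)‖ =
      ((k : ℝ) + 1) ^ s * ‖t‖ * ‖(k.factorial : ℝ) ^ s * t ^ k‖ := by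
  have hk : (0 : ℝ) ≤ k.factorial := k.factorial.cast_nonneg
  rw [Nat.factorial_succ, Nat.cast_mul, Real.mul_rpow (by positivity) hk, norm_mul, norm_mul,
    norm_mul, norm_pow, norm_pow, pow_succ, Real.norm_of_nonneg (Real.rpow_nonneg (by positivity) _),
    Real.norm_of_nonneg (Real.rpow_nonneg hk _)]
  push_cast
  ring

theorem summable_factorial_rpow_mul_pow {R : ℝ} (hR : R < 1) (t : ℝ) :
    Summable (fun k : ℕ => (k.factorial : ℝ) ^ (R - 1) * t ^ k) := by
  have hratio : Tendsto (fun k : ℕ => ((k : ℝ) + 1) ^ (R - 1) * ‖t‖) atTop (𝓝 0) := by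
    have hpow := (tendsto_rpow_neg_atTop (y := 1 - R) (by linarith)).comp
      (tendsto_atTop_add_const_right atTop 1 tendsto_natCast_atTop_atTop)
    simpa [Function.comp_def] using hpow.mul_const ‖t‖
  refine summable_of_ratio_norm_eventually_le (r := 1 / 2) (by norm_num) ?_
  filter_upwards [hratio.eventually_le_const (by norm_num : (0 : ℝ) < 1 / 2)] with k hk
  rw [norm_factorial_rpow_mul_pow_succ]
  exact mul_le_mul_of_nonneg_right hk (norm_nonneg _)

section chainApply

variable {W : Type*} [NormedAddCommGroup W] [NormedSpace ℂ W] {n : ℕ} (T : Fin n → W →L[ℂ] W)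

lemma norm_chainApply_le (l : List (Fin n)) (x : W) :
    ‖chainApply T l x‖ ≤ (l.map fun i => ‖T i‖).prod * ‖x‖ := by
  induction l with
  | nil => simp [chainApply]
  | cons i l ih =>
    calc ‖T i (chainApply T l x)‖ ≤ ‖T i‖ * ‖chainApply T l x‖ := (T i).le_opNorm _
      _ ≤ ‖T i‖ * ((l.map fun i => ‖T i‖).prod * ‖x‖) := by gcongr
      _ = _ := by rw [List.map_cons, List.prod_cons, mul_assoc]

lemma sum_norm_chainApply_ofFn_le (k : ℕ) (x : W) :
    ∑ α : Fin k → Fin n, ‖chainApply T (List.ofFn α) x‖ ≤ (∑ i, ‖T i‖) ^ k * ‖x‖ := by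
  rw [Fintype.sum_pow, Finset.sum_mul]
  gcongr with α
  simpa [List.map_ofFn, List.prod_ofFn] using norm_chainApply_le T (List.ofFn α) x

lemma sum_norm_apply_chainApply_ofFn_le (δ : W →L[ℂ] ℂ) {Ψ : ℝ} (hΨ : ∀ i, ‖T i‖ ≤ Ψ)
    (k : ℕ) (x : W) :
    ∑ α : Fin k → Fin n, ‖δ (chainApply T (List.ofFn α) x)‖ ≤ ‖δ‖ * ‖x‖ * (Ψ * n) ^ k := by
  have hsum : ∑ i, ‖T i‖ ≤ Ψ * n := by
    simpa [mul_comm] using Finset.sum_le_card_nsmul Finset.univ _ Ψ fun i _ => hΨ i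
  calc ∑ α : Fin k → Fin n, ‖δ (chainApply T (List.ofFn α) x)‖
      ≤ ∑ α : Fin k → Fin n, ‖δ‖ * ‖chainApply T (List.ofFn α) x‖ :=
        Finset.sum_le_sum fun α _ => δ.le_opNorm _
    _ ≤ ‖δ‖ * ((∑ i, ‖T i‖) ^ k * ‖x‖) := by
        rw [← Finset.mul_sum]
        exact mul_le_mul_of_nonneg_left (sum_norm_chainApply_ofFn_le T k x) (norm_nonneg δ)
    _ ≤ ‖δ‖ * ((Ψ * n) ^ k * ‖x‖) := by gcongr
    _ = ‖δ‖ * ‖x‖ * (Ψ * n) ^ k := by ring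

end chainApply

theorem representative_function_R_entire_general {W : Type*}
    [NormedAddCommGroup W] [NormedSpace ℂ W] {n : ℕ}
    (T : Fin n → W →L[ℂ] W) (δ : W →L[ℂ] ℂ) (φ : W) (R c Ψ : ℝ)
    (hR : R < 1) (hc : 0 ≤ c) (hΨ : ∀ i, ‖T i‖ ≤ Ψ) :
    Summable (fun k : ℕ => (k.factorial : ℝ) ^ (R - 1) * (c * Ψ * n) ^ k) ∧
    Summable (fun k : ℕ => (k.factorial : ℝ) ^ (R - 1) * c ^ k *
      ∑ α : Fin k → Fin n, ‖δ (chainApply T (List.ofFn α) φ)‖) ∧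
    ∑' k : ℕ, (k.factorial : ℝ) ^ (R - 1) * c ^ k *
        ∑ α : Fin k → Fin n, ‖δ (chainApply T (List.ofFn α) φ)‖ ≤
      ‖δ‖ * ‖φ‖ * ∑' k : ℕ, (k.factorial : ℝ) ^ (R - 1) * (c * Ψ * n) ^ k := by
  have hmajorant := summable_factorial_rpow_mul_pow hR (c * Ψ * n)
  have hweight (k : ℕ) : 0 ≤ (k.factorial : ℝ) ^ (R - 1) * c ^ k :=
    mul_nonneg (Real.rpow_nonneg k.factorial.cast_nonneg _) (pow_nonneg hc k)
  have hnonneg (k : ℕ) : 0 ≤ (k.factorial : ℝ) ^ (R - 1) * c ^ k *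
      ∑ α : Fin k → Fin n, ‖δ (chainApply T (List.ofFn α) φ)‖ :=
    mul_nonneg (hweight k) (Finset.sum_nonneg fun _ _ => norm_nonneg _)
  have hle (k : ℕ) : (k.factorial : ℝ) ^ (R - 1) * c ^ k *
      ∑ α : Fin k → Fin n, ‖δ (chainApply T (List.ofFn α) φ)‖ ≤
        ‖δ‖ * ‖φ‖ * ((k.factorial : ℝ) ^ (R - 1) * (c * Ψ * n) ^ k) :=
    calc _ ≤ (k.factorial : ℝ) ^ (R - 1) * c ^ k * (‖δ‖ * ‖φ‖ * (Ψ * n) ^ k) :=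
          mul_le_mul_of_nonneg_left (sum_norm_apply_chainApply_ofFn_le T δ hΨ k φ) (hweight k)
      _ = _ := by rw [mul_assoc c, mul_pow c]; ring
  have hsummable := Summable.of_nonneg_of_le hnonneg hle (hmajorant.mul_left _)
  refine ⟨hmajorant, hsummable, ?_⟩
  rw [← tsum_mul_left]
  exact hsummable.tsum_le_tsum hle (hmajorant.mul_left _)

/-- A representative function is `R`-entire for every `R < 1`: if `φ` lies in a
(finite-dimensional) normed space `W` (modelling its orbit `O_φ`) invariant under the
basis Lie derivatives `T i = L_{X_i}` whose operator norms are bounded by `Ψ`, and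
`δ = δ_e` is the evaluation functional at the unit, then for every `c ≥ 0` the seminorm
`q_{R,c}(φ) = Σ_k k!^{R−1} c^k Σ_{α∈{1,…,n}^k} |δ(T_{α₁}⋯T_{α_k} φ)|` is finite and
bounded by `Δ·‖φ‖·Σ_k k!^{R−1}(cΨn)^k < ∞`, where `Δ = ‖δ‖`. -/
theorem representative_function_R_entire {W : Type*}
    [NormedAddCommGroup W] [NormedSpace ℂ W] {n : ℕ}
    (T : Fin n → W →L[ℂ] W) (δ : W →L[ℂ] ℂ) (φ : W) (R c Ψ : ℝ)
    (hR : R < 1) (hc : 0 ≤ c) (hΨ0 : 0 ≤ Ψ) (hΨ : ∀ i, ‖T i‖ ≤ Ψ) :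
    Summable (fun k : ℕ => (k.factorial : ℝ) ^ (R - 1) * (c * Ψ * n) ^ k) ∧
    Summable (fun k : ℕ => (k.factorial : ℝ) ^ (R - 1) * c ^ k *
      ∑ α : Fin k → Fin n, ‖δ (chainApply T (List.ofFn α) φ)‖) ∧
    ∑' k : ℕ, (k.factorial : ℝ) ^ (R - 1) * c ^ k *
        ∑ α : Fin k → Fin n, ‖δ (chainApply T (List.ofFn α) φ)‖ ≤
      ‖δ‖ * ‖φ‖ * ∑' k : ℕ, (k.factorial : ℝ) ^ (R - 1) * (c * Ψ * n) ^ k :=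
  representative_function_R_entire_general T δ φ R c Ψ hR hc hΨ
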